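/- arXiv:1811.11056 — 2 statements merged into one kernel-verified Lean document; each statement's English description precedes it below -/
import Mathlib

section
/- If α₁ = 1 and α₂ = 2, then ∫₀^{2π} √(κ₁(t)² + κ₂(t)² + κ₃(t)²)·‖x′(t)‖ dt = 2√5·π, where κ₁, κ₂, κ₃ are the first three Frenet curvatures of x; hence the lower bound 2√5·π for this integral over closed curves of constant curvatures in ℝ⁴ is attained. -/
open Real intervalIntegral

/-- The curve `x(t) = (a₁ cos(α₁ t), a₁ sin(α₁ t), a₂ cos(α₂ t), a₂ sin(α₂ t))` in `ℝ⁴`. -/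
noncomputable def curveX (a₁ a₂ α₁ α₂ : ℝ) : ℝ → EuclideanSpace ℝ (Fin 4) :=
  fun t => (WithLp.equiv 2 (Fin 4 → ℝ)).symm
    ![a₁ * Real.cos (α₁ * t), a₁ * Real.sin (α₁ * t),
      a₂ * Real.cos (α₂ * t), a₂ * Real.sin (α₂ * t)]

/-- `D_j(t)`: the determinant of the `j × j` Gram matrix whose `(a,b)` entry is the inner
product of the `a`-th and `b`-th derivatives of `y` at `t` (`1 ≤ a, b ≤ j`); `D₀ = 1`. -/
noncomputable def gramDet {n : ℕ} (y : ℝ → EuclideanSpace ℝ (Fin n)) (j : ℕ) (t : ℝ) : ℝ :=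
  Matrix.det (Matrix.of fun a b : Fin j =>
    (inner ℝ (iteratedDeriv (a.val + 1) y t) (iteratedDeriv (b.val + 1) y t) : ℝ))

/-- The `j`-th Frenet curvature `κ_j(t) = √(D_{j+1} D_{j-1}) / (D_j ‖y′(t)‖)` (for `j ≥ 1`). -/
noncomputable def frenetCurvature {n : ℕ} (y : ℝ → EuclideanSpace ℝ (Fin n)) (j : ℕ) (t : ℝ) :
    ℝ :=
  Real.sqrt (gramDet y (j + 1) t * gramDet y (j - 1) t) / (gramDet y j t * ‖deriv y t‖)

/-- The Plücker coordinates `w(t)` of the exterior product of `x′(t)` and `x″(t)`. -/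
noncomputable def oscW (x : ℝ → EuclideanSpace ℝ (Fin 4)) (t : ℝ) : EuclideanSpace ℝ (Fin 6) :=
  (WithLp.equiv 2 (Fin 6 → ℝ)).symm
    ![deriv x t 0 * deriv (deriv x) t 1 - deriv x t 1 * deriv (deriv x) t 0,
      deriv x t 0 * deriv (deriv x) t 2 - deriv x t 2 * deriv (deriv x) t 0,
      deriv x t 0 * deriv (deriv x) t 3 - deriv x t 3 * deriv (deriv x) t 0,
      deriv x t 1 * deriv (deriv x) t 2 - deriv x t 2 * deriv (deriv x) t 1,
      deriv x t 1 * deriv (deriv x) t 3 - deriv x t 3 * deriv (deriv x) t 1,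
      deriv x t 2 * deriv (deriv x) t 3 - deriv x t 3 * deriv (deriv x) t 2]

/-- The osculating indicatrix `x̃(t) = w(t) / ‖w(t)‖`. -/
noncomputable def oscInd (x : ℝ → EuclideanSpace ℝ (Fin 4)) (t : ℝ) :
    EuclideanSpace ℝ (Fin 6) :=
  ‖oscW x t‖⁻¹ • oscW x t

/-!
Each derivative of `x` is again a pair of uniform circular motions: `x⁽ᵏ⁾` has radii `aᵢ αᵢᵏ`
and its phase is shifted by `k π / 2`. Hence `⟨x⁽ⁱ⁾, x⁽ʲ⁾⟩ = s_{i+j} cos ((i - j) π / 2)` with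
`s_m = a₁² α₁ᵐ + a₂² α₂ᵐ` does not depend on `t`, the Gram determinants are explicit polynomials
in the `s_m`, and `(κ₁² + κ₂² + κ₃²) ‖x′‖² = ∑ D_{j+1} D_{j-1} / D_j²` collapses to `α₁² + α₂²`
whatever the radii. For `(α₁, α₂) = (1, 2)` the integrand is the constant `√5`.
-/

section Frenet

variable {n : ℕ} (y : ℝ → EuclideanSpace ℝ (Fin n)) (t : ℝ)

theorem gramDet_nonneg (j : ℕ) : 0 ≤ gramDet y j t :=
  (Matrix.posSemidef_gram ℝ fun a : Fin j => iteratedDeriv (a.val + 1) y t).det_nonneg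

theorem gramDet_eq_det_submatrix {j m : ℕ} (h : j ≤ m) :
    gramDet y j t = ((Matrix.gram ℝ fun a : Fin m => iteratedDeriv (a.val + 1) y t).submatrix
      (Fin.castLE h) (Fin.castLE h)).det :=
  rfl

theorem gramDet_zero : gramDet y 0 t = 1 :=
  Matrix.det_isEmpty

theorem gramDet_one : gramDet y 1 t = ‖deriv y t‖ ^ 2 := by
  simp [gramDet, iteratedDeriv_one]

theorem frenetCurvature_sq_mul_norm_deriv_sq (j : ℕ) (hy : deriv y t ≠ 0) :
    frenetCurvature y j t ^ 2 * ‖deriv y t‖ ^ 2 =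
      gramDet y (j + 1) t * gramDet y (j - 1) t / gramDet y j t ^ 2 := by
  have hnorm : ‖deriv y t‖ ≠ 0 := norm_ne_zero_iff.mpr hy
  rw [frenetCurvature, div_pow, sq_sqrt (mul_nonneg (gramDet_nonneg ..) (gramDet_nonneg ..)),
    mul_pow]
  field_simp

end Frenet

/-- `curveX` with both angles advanced by `φ`; differentiation multiplies the radii by the
frequencies and advances the phase by `π / 2`. -/
noncomputable def helix (c₁ c₂ α₁ α₂ φ t : ℝ) : EuclideanSpace ℝ (Fin 4) :=
  WithLp.toLp 2 ![c₁ * cos (α₁ * t + φ), c₁ * sin (α₁ * t + φ),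
    c₂ * cos (α₂ * t + φ), c₂ * sin (α₂ * t + φ)]

section Helix

variable (c₁ c₂ α₁ α₂ : ℝ)

theorem hasDerivAt_helix (φ t : ℝ) :
    HasDerivAt (helix c₁ c₂ α₁ α₂ φ) (helix (c₁ * α₁) (c₂ * α₂) α₁ α₂ (φ + π / 2) t) t := by
  have hcos (c α : ℝ) : HasDerivAt (fun s => c * cos (α * s + φ))
      (c * α * cos (α * t + (φ + π / 2))) t := by
    rw [← add_assoc, cos_add_pi_div_two]
    exact ((((hasDerivAt_id' t).const_mul α).add_const φ).cos.const_mul c).congr_deriv (by ring)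
  have hsin (c α : ℝ) : HasDerivAt (fun s => c * sin (α * s + φ))
      (c * α * sin (α * t + (φ + π / 2))) t := by
    rw [← add_assoc, sin_add_pi_div_two]
    exact ((((hasDerivAt_id' t).const_mul α).add_const φ).sin.const_mul c).congr_deriv (by ring)
  have hcoord : HasDerivAt (fun s => ![c₁ * cos (α₁ * s + φ), c₁ * sin (α₁ * s + φ),
      c₂ * cos (α₂ * s + φ), c₂ * sin (α₂ * s + φ)])
      (WithLp.ofLp (helix (c₁ * α₁) (c₂ * α₂) α₁ α₂ (φ + π / 2) t)) t := by
    refine hasDerivAt_pi.mpr fun i => ?_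
    fin_cases i
    exacts [hcos c₁ α₁, hsin c₁ α₁, hcos c₂ α₂, hsin c₂ α₂]
  exact (PiLp.hasFDerivAt_toLp 2 _).comp_hasDerivAt t hcoord

theorem iteratedDeriv_helix (k : ℕ) (φ : ℝ) :
    iteratedDeriv k (helix c₁ c₂ α₁ α₂ φ) =
      helix (c₁ * α₁ ^ k) (c₂ * α₂ ^ k) α₁ α₂ (φ + k * (π / 2)) := by
  induction k generalizing c₁ c₂ φ with
  | zero => simp
  | succ k ih =>
    rw [iteratedDeriv_succ', funext fun t => (hasDerivAt_helix c₁ c₂ α₁ α₂ φ t).deriv, ih]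
    congr 1 <;> push_cast <;> ring

theorem inner_helix (d₁ d₂ φ ψ t : ℝ) :
    inner ℝ (helix c₁ c₂ α₁ α₂ φ t) (helix d₁ d₂ α₁ α₂ ψ t) = (c₁ * d₁ + c₂ * d₂) * cos (φ - ψ) := by
  have h₁ := cos_sub (α₁ * t + φ) (α₁ * t + ψ)
  have h₂ := cos_sub (α₂ * t + φ) (α₂ * t + ψ)
  simp only [add_sub_add_left_eq_sub] at h₁ h₂
  simp only [helix, PiLp.inner_apply, RCLike.inner_apply, conj_trivial, Fin.sum_univ_four,
    Matrix.cons_val_zero, Matrix.cons_val_one, Matrix.cons_val]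
  linear_combination -(c₁ * d₁) * h₁ - (c₂ * d₂) * h₂

end Helix

theorem curveX_eq_helix (a₁ a₂ α₁ α₂ : ℝ) : curveX a₁ a₂ α₁ α₂ = helix a₁ a₂ α₁ α₂ 0 := by
  funext t
  simp [curveX, helix]

noncomputable def weightedPowerSum (a₁ a₂ α₁ α₂ : ℝ) (m : ℕ) : ℝ :=
  a₁ ^ 2 * α₁ ^ m + a₂ ^ 2 * α₂ ^ m

section CurveX

variable (a₁ a₂ α₁ α₂ t : ℝ)

local notation "s" => weightedPowerSum a₁ a₂ α₁ α₂

theorem inner_iteratedDeriv_curveX (i j : ℕ) :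
    inner ℝ (iteratedDeriv i (curveX a₁ a₂ α₁ α₂) t) (iteratedDeriv j (curveX a₁ a₂ α₁ α₂) t) =
      s (i + j) * cos ((i - j : ℝ) * (π / 2)) := by
  rw [curveX_eq_helix, iteratedDeriv_helix, iteratedDeriv_helix, inner_helix, weightedPowerSum]
  congr 1
  · ring
  · congr 1
    ring

theorem gram_iteratedDeriv_curveX :
    Matrix.gram ℝ (fun a : Fin 4 => iteratedDeriv (a.val + 1) (curveX a₁ a₂ α₁ α₂) t) =
      !![s 2, 0, -s 4, 0; 0, s 4, 0, -s 6; -s 4, 0, s 6, 0; 0, -s 6, 0, s 8] := by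
  have hπ : cos (2 * (π / 2)) = -1 := by rw [mul_div_cancel₀ π two_ne_zero, cos_pi]
  have h3π : cos (3 * (π / 2)) = 0 := by
    rw [show 3 * (π / 2) = π / 2 + π by ring, cos_add_pi, cos_pi_div_two, neg_zero]
  ext a b
  fin_cases a <;> fin_cases b <;> norm_num [Matrix.gram, inner_iteratedDeriv_curveX, hπ, h3π]

theorem gramDet_curveX_one : gramDet (curveX a₁ a₂ α₁ α₂) 1 t = s 2 := by
  rw [gramDet_eq_det_submatrix _ _ (by norm_num : 1 ≤ 4), gram_iteratedDeriv_curveX]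
  simp

theorem gramDet_curveX_two : gramDet (curveX a₁ a₂ α₁ α₂) 2 t = s 2 * s 4 := by
  rw [gramDet_eq_det_submatrix _ _ (by norm_num : 2 ≤ 4), gram_iteratedDeriv_curveX]
  simp [Matrix.det_fin_two]

theorem gramDet_curveX_three :
    gramDet (curveX a₁ a₂ α₁ α₂) 3 t = s 4 * (s 2 * s 6 - s 4 ^ 2) := by
  rw [gramDet_eq_det_submatrix _ _ (by norm_num : 3 ≤ 4), gram_iteratedDeriv_curveX]
  simp [Matrix.det_fin_three]
  ring

theorem gramDet_curveX_four :
    gramDet (curveX a₁ a₂ α₁ α₂) 4 t = (s 2 * s 6 - s 4 ^ 2) * (s 4 * s 8 - s 6 ^ 2) := by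
  rw [gramDet, ← Matrix.gram, gram_iteratedDeriv_curveX, Matrix.det_succ_row_zero]
  simp [Fin.sum_univ_succ, Matrix.det_fin_three, Fin.succAbove]
  ring

end CurveX

section Curvatures

variable {a₁ a₂ α₁ α₂ : ℝ}

local notation "s" => weightedPowerSum a₁ a₂ α₁ α₂

theorem weightedPowerSum_two_mul_six_sub_sq :
    s 2 * s 6 - s 4 ^ 2 = (a₁ * a₂ * α₁ * α₂ * (α₁ ^ 2 - α₂ ^ 2)) ^ 2 := by
  simp only [weightedPowerSum]
  ring

theorem weightedPowerSum_four_mul_eight_sub_sq :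
    s 4 * s 8 - s 6 ^ 2 = (α₁ * α₂) ^ 2 * (s 2 * s 6 - s 4 ^ 2) := by
  simp only [weightedPowerSum]
  ring

theorem sum_frenetCurvature_sq_mul_norm_deriv_sq_curveX (ha₁ : a₁ ≠ 0) (ha₂ : a₂ ≠ 0)
    (hα₁ : α₁ ≠ 0) (hα₂ : α₂ ≠ 0) (hα : α₁ ^ 2 ≠ α₂ ^ 2) (t : ℝ) :
    (frenetCurvature (curveX a₁ a₂ α₁ α₂) 1 t ^ 2 + frenetCurvature (curveX a₁ a₂ α₁ α₂) 2 t ^ 2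
      + frenetCurvature (curveX a₁ a₂ α₁ α₂) 3 t ^ 2) * ‖deriv (curveX a₁ a₂ α₁ α₂) t‖ ^ 2 =
      α₁ ^ 2 + α₂ ^ 2 := by
  have hs₂ : 0 < s 2 := by simp only [weightedPowerSum]; positivity
  have hs₄ : 0 < s 4 := by simp only [weightedPowerSum]; positivity
  have hΔ : s 2 * s 6 - s 4 ^ 2 ≠ 0 := by
    rw [weightedPowerSum_two_mul_six_sub_sq]
    exact pow_ne_zero 2 (by simp [*, sub_ne_zero])
  have hderiv : deriv (curveX a₁ a₂ α₁ α₂) t ≠ 0 := by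
    intro h
    have h₁ := gramDet_one (curveX a₁ a₂ α₁ α₂) t
    rw [gramDet_curveX_one, h, norm_zero] at h₁
    exact hs₂.ne' (by simpa using h₁)
  simp only [add_mul, frenetCurvature_sq_mul_norm_deriv_sq _ _ _ hderiv]
  norm_num only [gramDet_zero, gramDet_curveX_one, gramDet_curveX_two, gramDet_curveX_three,
    gramDet_curveX_four, weightedPowerSum_four_mul_eight_sub_sq]
  field_simp
  simp only [weightedPowerSum]
  ring

end Curvatures

theorem sqrt_sum_frenetCurvature_sq_mul_norm_deriv_curveX {a₁ a₂ α₁ α₂ : ℝ} (ha₁ : a₁ ≠ 0)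
    (ha₂ : a₂ ≠ 0) (hα₁ : α₁ ≠ 0) (hα₂ : α₂ ≠ 0) (hα : α₁ ^ 2 ≠ α₂ ^ 2) (t : ℝ) :
    √(frenetCurvature (curveX a₁ a₂ α₁ α₂) 1 t ^ 2 + frenetCurvature (curveX a₁ a₂ α₁ α₂) 2 t ^ 2
      + frenetCurvature (curveX a₁ a₂ α₁ α₂) 3 t ^ 2) * ‖deriv (curveX a₁ a₂ α₁ α₂) t‖ =
      √(α₁ ^ 2 + α₂ ^ 2) := by
  rw [← sqrt_sq (norm_nonneg _), ← sqrt_mul (by positivity),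
    sum_frenetCurvature_sq_mul_norm_deriv_sq_curveX ha₁ ha₂ hα₁ hα₂ hα]

theorem stmt1 (a₁ a₂ : ℝ) (ha₁ : 0 < a₁) (ha₂ : 0 < a₂) :
    (∫ t in (0:ℝ)..2 * Real.pi,
      Real.sqrt (frenetCurvature (curveX a₁ a₂ 1 2) 1 t ^ 2 + frenetCurvature (curveX a₁ a₂ 1 2) 2 t ^ 2
        + frenetCurvature (curveX a₁ a₂ 1 2) 3 t ^ 2) * ‖deriv (curveX a₁ a₂ 1 2) t‖) = 2 * Real.sqrt 5 * Real.pi := by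
  simp only [sqrt_sum_frenetCurvature_sq_mul_norm_deriv_curveX ha₁.ne' ha₂.ne' one_ne_zero
    two_ne_zero (by norm_num), integral_const]
  norm_num
  ring
end

section
/- For every t ∈ ℝ, the norm of the derivative of the osculating indicatrix satisfies ‖x̃′(t)‖ = a₁a₂α₁α₂·|α₁² − α₂²| / λ. -/
open Real intervalIntegral

/-!
The curve solves the linear equation `x′ = J x`, where `J = rotationGenerator α₁ α₂` is the
infinitesimal rotation of the two coordinate planes with speeds `α₁` and `α₂`. Hence `x″ = J² x`,
`x‴ = J³ x`, and `w = x′ ∧ x″` has derivative `x″ ∧ x″ + x′ ∧ x‴ = x′ ∧ x‴`. Because `x′ ⟂ x″`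
and both circles have constant radii, `‖w‖ = ‖x′‖ ‖x″‖ = λ` is constant, so `x̃′ = w′ / λ`. In
`w′ = x′ ∧ J² x′` the two in-plane coordinates vanish and the four mixed ones have total length
`a₁ a₂ α₁ α₂ |α₁² - α₂²|`.
-/

theorem hasDerivAt_euclideanSpace_iff {ι : Type*} [Fintype ι] {f : ℝ → EuclideanSpace ℝ ι}
    {f' : EuclideanSpace ℝ ι} {t : ℝ} :
    HasDerivAt f f' t ↔ ∀ i, HasDerivAt (fun s => f s i) (f' i) t := by
  refine ⟨fun h i => ?_, fun h => ?_⟩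
  · exact (EuclideanSpace.proj i : EuclideanSpace ℝ ι →L[ℝ] ℝ).hasFDerivAt.comp_hasDerivAt t h
  · exact (PiLp.continuousLinearEquiv 2 ℝ (fun _ : ι => ℝ)).symm.hasFDerivAt.comp_hasDerivAt t
      (hasDerivAt_pi.2 h)

theorem HasDerivAt.norm_inv_smul_of_norm_eq {E : Type*} [NormedAddCommGroup E] [NormedSpace ℝ E]
    {w : ℝ → E} {w' : E} {c t : ℝ} (hc : ∀ s, ‖w s‖ = c) (hw : HasDerivAt w w' t) :
    HasDerivAt (fun s => ‖w s‖⁻¹ • w s) (c⁻¹ • w') t := by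
  simp only [hc]
  exact hw.const_smul c⁻¹

def pluckerIndex : Fin 6 → Fin 4 × Fin 4 := ![(0, 1), (0, 2), (0, 3), (1, 2), (1, 3), (2, 3)]

noncomputable def plucker (u v : EuclideanSpace ℝ (Fin 4)) : EuclideanSpace ℝ (Fin 6) :=
  WithLp.toLp 2 fun k =>
    u (pluckerIndex k).1 * v (pluckerIndex k).2 - u (pluckerIndex k).2 * v (pluckerIndex k).1

theorem plucker_apply (u v : EuclideanSpace ℝ (Fin 4)) (k : Fin 6) :
    plucker u v k =
      u (pluckerIndex k).1 * v (pluckerIndex k).2 - u (pluckerIndex k).2 * v (pluckerIndex k).1 :=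
  rfl

theorem plucker_self (u : EuclideanSpace ℝ (Fin 4)) : plucker u u = 0 := by
  ext k
  simp [plucker_apply, mul_comm]

theorem oscW_eq_plucker (x : ℝ → EuclideanSpace ℝ (Fin 4)) (t : ℝ) :
    oscW x t = plucker (deriv x t) (deriv (deriv x) t) := by
  ext k
  fin_cases k <;> rfl

theorem HasDerivAt.plucker {u v : ℝ → EuclideanSpace ℝ (Fin 4)} {u' v' : EuclideanSpace ℝ (Fin 4)}
    {t : ℝ} (hu : HasDerivAt u u' t) (hv : HasDerivAt v v' t) :
    HasDerivAt (fun s => plucker (u s) (v s)) (plucker u' (v t) + plucker (u t) v') t := by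
  rw [hasDerivAt_euclideanSpace_iff] at hu hv ⊢
  intro k
  simp only [plucker_apply, PiLp.add_apply]
  exact (((hu _).mul (hv _)).sub ((hu _).mul (hv _))).congr_deriv (by ring)

noncomputable def rotationGenerator (α₁ α₂ : ℝ) :
    EuclideanSpace ℝ (Fin 4) →L[ℝ] EuclideanSpace ℝ (Fin 4) :=
  LinearMap.toContinuousLinearMap
    { toFun := fun y => WithLp.toLp 2 ![-(α₁ * y 1), α₁ * y 0, -(α₂ * y 3), α₂ * y 2]
      map_add' := fun y z => by ext i; fin_cases i <;> simp [mul_add, add_comm]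
      map_smul' := fun c y => by ext i; fin_cases i <;> simp [mul_left_comm] }

theorem rotationGenerator_apply (α₁ α₂ : ℝ) (y : EuclideanSpace ℝ (Fin 4)) :
    rotationGenerator α₁ α₂ y = WithLp.toLp 2 ![-(α₁ * y 1), α₁ * y 0, -(α₂ * y 3), α₂ * y 2] :=
  rfl

section rotationGenerator

variable {α₁ α₂ : ℝ} (y : EuclideanSpace ℝ (Fin 4))

theorem norm_sq_plucker_rotationGenerator :
    ‖plucker (rotationGenerator α₁ α₂ y)
        (rotationGenerator α₁ α₂ (rotationGenerator α₁ α₂ y))‖ ^ 2 =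
      ((y 0 ^ 2 + y 1 ^ 2) * α₁ ^ 2 + (y 2 ^ 2 + y 3 ^ 2) * α₂ ^ 2) *
        ((y 0 ^ 2 + y 1 ^ 2) * α₁ ^ 4 + (y 2 ^ 2 + y 3 ^ 2) * α₂ ^ 4) := by
  simp only [EuclideanSpace.norm_sq_eq, Real.norm_eq_abs, sq_abs, Fin.sum_univ_six, plucker_apply,
    pluckerIndex, rotationGenerator_apply, Fin.isValue, Matrix.cons_val_zero, Matrix.cons_val_one,
    Matrix.cons_val]
  ring

theorem norm_sq_plucker_rotationGenerator_cube :
    ‖plucker (rotationGenerator α₁ α₂ y)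
        (rotationGenerator α₁ α₂ (rotationGenerator α₁ α₂ (rotationGenerator α₁ α₂ y)))‖ ^ 2 =
      (α₁ * α₂ * (α₁ ^ 2 - α₂ ^ 2)) ^ 2 * (y 0 ^ 2 + y 1 ^ 2) * (y 2 ^ 2 + y 3 ^ 2) := by
  simp only [EuclideanSpace.norm_sq_eq, Real.norm_eq_abs, sq_abs, Fin.sum_univ_six, plucker_apply,
    pluckerIndex, rotationGenerator_apply, Fin.isValue, Matrix.cons_val_zero, Matrix.cons_val_one,
    Matrix.cons_val]
  ring

end rotationGenerator

theorem hasDerivAt_mul_cos_mul (a α t : ℝ) :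
    HasDerivAt (fun s => a * cos (α * s)) (-(α * (a * sin (α * t)))) t :=
  (((hasDerivAt_id t).const_mul α).cos.const_mul a).congr_deriv (by simp only [id, mul_one]; ring)

theorem hasDerivAt_mul_sin_mul (a α t : ℝ) :
    HasDerivAt (fun s => a * sin (α * s)) (α * (a * cos (α * t))) t :=
  (((hasDerivAt_id t).const_mul α).sin.const_mul a).congr_deriv (by simp only [id, mul_one]; ring)

section curveX

variable {a₁ a₂ α₁ α₂ : ℝ}

theorem hasDerivAt_curveX (t : ℝ) :
    HasDerivAt (curveX a₁ a₂ α₁ α₂) (rotationGenerator α₁ α₂ (curveX a₁ a₂ α₁ α₂ t)) t := by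
  rw [hasDerivAt_euclideanSpace_iff]
  intro i
  fin_cases i
  exacts [hasDerivAt_mul_cos_mul a₁ α₁ t, hasDerivAt_mul_sin_mul a₁ α₁ t,
    hasDerivAt_mul_cos_mul a₂ α₂ t, hasDerivAt_mul_sin_mul a₂ α₂ t]

theorem curveX_sq_add_sq_fst (t : ℝ) :
    curveX a₁ a₂ α₁ α₂ t 0 ^ 2 + curveX a₁ a₂ α₁ α₂ t 1 ^ 2 = a₁ ^ 2 := by
  change (a₁ * cos (α₁ * t)) ^ 2 + (a₁ * sin (α₁ * t)) ^ 2 = a₁ ^ 2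
  linear_combination a₁ ^ 2 * cos_sq_add_sin_sq (α₁ * t)

theorem curveX_sq_add_sq_snd (t : ℝ) :
    curveX a₁ a₂ α₁ α₂ t 2 ^ 2 + curveX a₁ a₂ α₁ α₂ t 3 ^ 2 = a₂ ^ 2 := by
  change (a₂ * cos (α₂ * t)) ^ 2 + (a₂ * sin (α₂ * t)) ^ 2 = a₂ ^ 2
  linear_combination a₂ ^ 2 * cos_sq_add_sin_sq (α₂ * t)

theorem deriv_curveX :
    deriv (curveX a₁ a₂ α₁ α₂) = rotationGenerator α₁ α₂ ∘ curveX a₁ a₂ α₁ α₂ :=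
  funext fun t => (hasDerivAt_curveX t).deriv

theorem hasDerivAt_rotationGenerator_comp_curveX (t : ℝ) :
    HasDerivAt (rotationGenerator α₁ α₂ ∘ curveX a₁ a₂ α₁ α₂)
      (rotationGenerator α₁ α₂ (rotationGenerator α₁ α₂ (curveX a₁ a₂ α₁ α₂ t))) t :=
  (rotationGenerator α₁ α₂).hasFDerivAt.comp_hasDerivAt t (hasDerivAt_curveX t)

theorem oscW_curveX (t : ℝ) :
    oscW (curveX a₁ a₂ α₁ α₂) t =
      plucker (rotationGenerator α₁ α₂ (curveX a₁ a₂ α₁ α₂ t))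
        (rotationGenerator α₁ α₂ (rotationGenerator α₁ α₂ (curveX a₁ a₂ α₁ α₂ t))) := by
  rw [oscW_eq_plucker, deriv_curveX, (hasDerivAt_rotationGenerator_comp_curveX t).deriv]
  rfl

theorem norm_oscW_curveX (t : ℝ) :
    ‖oscW (curveX a₁ a₂ α₁ α₂) t‖ =
      √(a₁ ^ 2 * α₁ ^ 2 + a₂ ^ 2 * α₂ ^ 2) * √(a₁ ^ 2 * α₁ ^ 4 + a₂ ^ 2 * α₂ ^ 4) := by
  rw [oscW_curveX, ← sqrt_sq (norm_nonneg _), norm_sq_plucker_rotationGenerator,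
    curveX_sq_add_sq_fst, curveX_sq_add_sq_snd, sqrt_mul (by positivity)]

theorem hasDerivAt_oscW_curveX (t : ℝ) :
    HasDerivAt (oscW (curveX a₁ a₂ α₁ α₂))
      (plucker (rotationGenerator α₁ α₂ (curveX a₁ a₂ α₁ α₂ t))
        (rotationGenerator α₁ α₂
          (rotationGenerator α₁ α₂ (rotationGenerator α₁ α₂ (curveX a₁ a₂ α₁ α₂ t))))) t := by
  have hv :=
    hasDerivAt_rotationGenerator_comp_curveX (a₁ := a₁) (a₂ := a₂) (α₁ := α₁) (α₂ := α₂) t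
  have h := hv.plucker ((rotationGenerator α₁ α₂).hasFDerivAt.comp_hasDerivAt t hv)
  rw [Function.comp_apply, Function.comp_apply, plucker_self, zero_add] at h
  exact h.congr_of_eventuallyEq (.of_forall oscW_curveX)

theorem norm_deriv_oscW_curveX (t : ℝ) :
    ‖deriv (oscW (curveX a₁ a₂ α₁ α₂)) t‖ = |a₁ * a₂ * α₁ * α₂ * (α₁ ^ 2 - α₂ ^ 2)| := by
  rw [(hasDerivAt_oscW_curveX t).deriv, ← sqrt_sq (norm_nonneg _),
    norm_sq_plucker_rotationGenerator_cube, curveX_sq_add_sq_fst, curveX_sq_add_sq_snd,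
    ← sqrt_sq_eq_abs]
  congr 1
  ring

end curveX

theorem stmt13_general (a₁ a₂ α₁ α₂ : ℝ) (ha₁ : 0 < a₁) (ha₂ : 0 < a₂)
    (hα₁ : 0 < α₁) (hα₂ : 0 < α₂) (lam : ℝ)
    (hlam : lam = Real.sqrt (a₁ ^ 2 * α₁ ^ 2 + a₂ ^ 2 * α₂ ^ 2) * Real.sqrt (a₁ ^ 2 * α₁ ^ 4 + a₂ ^ 2 * α₂ ^ 4)) :
    ∀ t : ℝ, ‖deriv (oscInd (curveX a₁ a₂ α₁ α₂)) t‖ = a₁ * a₂ * α₁ * α₂ * |α₁ ^ 2 - α₂ ^ 2| / lam := by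
  intro t
  have hlam_nonneg : 0 ≤ lam := hlam ▸ by positivity
  have hind : HasDerivAt (oscInd (curveX a₁ a₂ α₁ α₂))
      (lam⁻¹ • deriv (oscW (curveX a₁ a₂ α₁ α₂)) t) t :=
    (hasDerivAt_oscW_curveX t).differentiableAt.hasDerivAt.norm_inv_smul_of_norm_eq
      fun s => (norm_oscW_curveX s).trans hlam.symm
  rw [hind.deriv, norm_smul, norm_inv, norm_of_nonneg hlam_nonneg, norm_deriv_oscW_curveX,
    abs_mul, abs_of_pos (by positivity : 0 < a₁ * a₂ * α₁ * α₂), inv_mul_eq_div]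

theorem stmt13 (a₁ a₂ α₁ α₂ : ℝ) (ha₁ : 0 < a₁) (ha₂ : 0 < a₂)
    (hα₁ : 0 < α₁) (hα₂ : 0 < α₂) (hne : α₁ ≠ α₂) (lam : ℝ)
    (hlam : lam = Real.sqrt (a₁ ^ 2 * α₁ ^ 2 + a₂ ^ 2 * α₂ ^ 2) * Real.sqrt (a₁ ^ 2 * α₁ ^ 4 + a₂ ^ 2 * α₂ ^ 4)) :
    ∀ t : ℝ, ‖deriv (oscInd (curveX a₁ a₂ α₁ α₂)) t‖ = a₁ * a₂ * α₁ * α₂ * |α₁ ^ 2 - α₂ ^ 2| / lam :=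
  stmt13_general a₁ a₂ α₁ α₂ ha₁ ha₂ hα₁ hα₂ lam hlam
end
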